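/- arXiv:2504.04028 — 4 statements merged into one kernel-verified Lean document; each statement's English description precedes it below -/
import Mathlib

section
/- Let f(x,y,z) = x³y + y³z + z³x over a finite field F_q of characteristic p ≠ 7 with 7 ∤ (q-1). Then the number of projective points on f = 0 over F_q is congruent to 1 modulo p. -/
/-!
Chevalley–Warning style count. Over `𝔽_q`, `1 - a ^ (q - 1)` is the indicator of `a = 0`, so the
number of affine zeros of a form `f` in `V` is `q ^ dim V - ∑ f ^ (q - 1) ≡ -∑ f ^ (q - 1)`
modulo `p`; the nonzero ones come in `(q - 1)`-element orbits over the projective zeros, so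
`#(projective zeros) ≡ 1 + ∑ f ^ (q - 1)`. For the Klein quartic, expanding `f ^ (q - 1)` by the
multinomial theorem gives monomials `x ^ (3a + c) y ^ (3b + a) z ^ (3c + b)` with
`a + b + c = q - 1`, and `∑ x ^ n` over `𝔽_q` vanishes unless `n` is a positive multiple of
`q - 1`. If all three exponents were, `q - 1` would divide `7a`, `7b`, `7c`, hence (as
`7 ∤ q - 1`) each of `a, b, c`, forcing one exponent to be `0`.
-/

open Finset

namespace FiniteField

variable {K : Type*} [Field K] [Fintype K]

theorem sum_pow_eq_zero {n : ℕ} (h : n = 0 ∨ ¬ Fintype.card K - 1 ∣ n) :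
    ∑ x : K, x ^ n = 0 := by
  classical
  rcases eq_or_ne n 0 with rfl | hn
  · simp
  calc ∑ x : K, x ^ n = ∑ x : {x : K // x ≠ 0}, (x : K) ^ n := by
        rw [Fintype.sum_eq_add_sum_subtype_ne _ 0, zero_pow hn, zero_add]
    _ = ∑ x : Kˣ, (x : K) ^ n := (Fintype.sum_equiv unitsEquivNeZero _ _ fun _ => rfl).symm
    _ = 0 := by rw [sum_pow_units, if_neg (h.resolve_left hn)]

theorem sum_prod_pow_eq_zero {ι : Type*} [Fintype ι] [DecidableEq ι] {e : ι → ℕ}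
    (h : ∃ i, e i = 0 ∨ ¬ Fintype.card K - 1 ∣ e i) :
    ∑ v : ι → K, ∏ i, v i ^ e i = 0 := by
  obtain ⟨i, hi⟩ := h
  rw [← Fintype.prod_sum fun i (x : K) => x ^ e i]
  exact prod_eq_zero (mem_univ i) (sum_pow_eq_zero hi)

theorem natCast_card_filter_eq_zero {α : Type*} [Fintype α] (f : α → K)
    [DecidablePred (f · = 0)] :
    (#{x | f x = 0} : K) = ∑ x, (1 - f x ^ (Fintype.card K - 1)) := by
  rw [natCast_card_filter]
  refine sum_congr rfl fun x _ => ?_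
  rcases eq_or_ne (f x) 0 with hx | hx
  · simp [hx, zero_pow (Nat.sub_ne_zero_of_lt Fintype.one_lt_card)]
  · simp [hx, pow_card_sub_one_eq_one _ hx]

end FiniteField

namespace Projectivization

open scoped LinearAlgebra.Projectivization

variable {K V : Type*} [DivisionRing K] [AddCommGroup V] [Module K V]

theorem natCard_subtype_ne_zero_and (p : V → Prop) (hp : ∀ (c : Kˣ) v, p (c • v) ↔ p v) :
    Nat.card {v : V // v ≠ 0 ∧ p v} = Nat.card {P : ℙ K V // p P.rep} * Nat.card Kˣ := by
  have hrep (v : {v : V // v ≠ 0}) : p (mk K v.1 v.2).rep ↔ p v := by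
    obtain ⟨c, hc⟩ := exists_smul_eq_mk_rep K v.1 v.2
    rw [← hc, hp]
  rw [← Nat.card_prod]
  exact Nat.card_congr <|
    (Equiv.subtypeSubtypeEquivSubtypeInter (· ≠ 0) p).symm.trans <|
      ((nonZeroEquivProjectivizationProdUnits K V).subtypeEquiv (q := fun x => p x.1.rep)
        fun v => (hrep v).symm).trans
          (Equiv.prodSubtypeFstEquivSubtypeProd (α := ℙ K V) (β := Kˣ)
            (p := fun P => p P.rep))

end Projectivization

open scoped LinearAlgebra.Projectivization in
theorem FiniteField.card_projective_zeros_modEq_one {K V : Type*} [Field K] [Fintype K]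
    [AddCommGroup V] [Module K V] [Fintype V] [Nontrivial V] (f : V → K) {d : ℕ} (hd : d ≠ 0)
    (hf : ∀ (c : K) v, f (c • v) = c ^ d * f v)
    (hsum : ∑ v, f v ^ (Fintype.card K - 1) = 0) :
    Nat.card {P : ℙ K V // f P.rep = 0} ≡ 1 [MOD ringChar K] := by
  classical
  set M := Nat.card {P : ℙ K V // f P.rep = 0}
  have hf0 : f 0 = 0 := by simpa [zero_pow hd] using hf 0 0
  have hzeros : #{v | f v = 0} = M * (Fintype.card K - 1) + 1 := by
    rw [← card_erase_add_one (a := 0) (by simpa using hf0), ← Fintype.card_units,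
      ← Nat.card_eq_fintype_card, ← Projectivization.natCard_subtype_ne_zero_and
        (fun v => f v = 0) fun c v => by simp [Units.smul_def, hf],
      Nat.card_eq_fintype_card, Fintype.card_subtype]
    congr 2
    ext v
    simp [and_comm]
  have hcard : (Fintype.card V : K) = 0 := by
    rw [Module.card_eq_pow_finrank (K := K), Nat.cast_pow, cast_card_eq_zero,
      zero_pow Module.finrank_pos.ne']
  have hM : ((M * (Fintype.card K - 1) + 1 : ℕ) : K) = 0 := by
    rw [← hzeros, natCast_card_filter_eq_zero, sum_sub_distrib, hsum, sum_const, card_univ,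
      nsmul_one, hcard, sub_zero]
  rw [Nat.cast_add, Nat.cast_mul, Nat.cast_sub Fintype.card_pos, cast_card_eq_zero] at hM
  refine (CharP.natCast_eq_natCast K (ringChar K)).mp ?_
  linear_combination -hM

theorem Finset.prod_pow_mul_add_pow {ι R : Type*} [AddGroup ι] [Fintype ι] [CommMonoid R]
    (v : ι → R) (m : ℕ) (s : ι) (k : ι → ℕ) :
    ∏ i, (v i ^ m * v (i + s)) ^ k i = ∏ i, v i ^ (m * k i + k (i - s)) := by
  simp_rw [mul_pow, prod_mul_distrib, ← pow_mul, pow_add, prod_mul_distrib, mul_comm m]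
  congr 1
  exact Fintype.prod_equiv (Equiv.addRight s) _ _ fun i => by
    rw [Equiv.coe_addRight, add_sub_cancel_right]

theorem Nat.dvd_of_dvd_three_mul_add {a b c Q : ℕ} (hQ : a + b + c = Q) (h7 : ¬ 7 ∣ Q)
    (ha : Q ∣ 3 * a + c) (hb : Q ∣ 3 * b + a) : Q ∣ a := by
  have h : Q ∣ 7 * a + Q * 3 := by
    have e : 3 * (3 * a + c) + (3 * b + a) = 7 * a + Q * 3 := by rw [← hQ]; ring
    exact e ▸ dvd_add (ha.mul_left 3) hb
  have hcop : Nat.Coprime Q 7 := ((Nat.Prime.coprime_iff_not_dvd Nat.prime_seven).mpr h7).symm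
  exact hcop.dvd_of_dvd_mul_left ((Nat.dvd_add_left (dvd_mul_right Q 3)).mp h)

theorem exists_three_mul_add_eq_zero_or_not_dvd {k : Fin 3 → ℕ} (h7 : ¬ 7 ∣ ∑ i, k i) :
    ∃ i, 3 * k i + k (i - 1) = 0 ∨ ¬ (∑ i, k i) ∣ 3 * k i + k (i - 1) := by
  by_contra! h
  set Q := ∑ i, k i with hQdef
  have hQ : k 0 + k 1 + k 2 = Q := by simp [hQdef, Fin.sum_univ_three]
  obtain ⟨h₀, hd₀⟩ := h 0
  obtain ⟨h₁, hd₁⟩ := h 1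
  obtain ⟨h₂, hd₂⟩ := h 2
  simp only [show (0 : Fin 3) - 1 = 2 from rfl, show (1 : Fin 3) - 1 = 0 from rfl,
    show (2 : Fin 3) - 1 = 1 from rfl] at h₀ hd₀ h₁ hd₁ h₂ hd₂
  have zero_or_eq {a : ℕ} (ha : Q ∣ a) (haQ : a ≤ Q) : a = 0 ∨ a = Q := by
    rcases haQ.lt_or_eq with h | h
    · exact .inl (Nat.eq_zero_of_dvd_of_lt ha h)
    · exact .inr h
  rcases zero_or_eq (Nat.dvd_of_dvd_three_mul_add hQ h7 hd₀ hd₁) (by omega) with ha | ha <;>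
  rcases zero_or_eq (Nat.dvd_of_dvd_three_mul_add (by omega) h7 hd₁ hd₂) (by omega) with hb | hb <;>
  omega

def kleinQuartic {R : Type*} [CommRing R] (v : Fin 3 → R) : R :=
  v 0 ^ 3 * v 1 + v 1 ^ 3 * v 2 + v 2 ^ 3 * v 0

section kleinQuartic

variable {R : Type*} [CommRing R]

theorem kleinQuartic_smul (c : R) (v : Fin 3 → R) :
    kleinQuartic (c • v) = c ^ 4 * kleinQuartic v := by
  simp only [kleinQuartic, Pi.smul_apply, smul_eq_mul]
  ring

theorem kleinQuartic_eq_sum (v : Fin 3 → R) : kleinQuartic v = ∑ i, v i ^ 3 * v (i + 1) := by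
  simp [kleinQuartic, Fin.sum_univ_three]

end kleinQuartic

theorem FiniteField.sum_kleinQuartic_pow_card_sub_one {K : Type*} [Field K] [Fintype K]
    (h7 : ¬ 7 ∣ Fintype.card K - 1) :
    ∑ v : Fin 3 → K, kleinQuartic v ^ (Fintype.card K - 1) = 0 := by
  simp_rw [kleinQuartic_eq_sum, sum_pow_eq_sum_piAntidiag, prod_pow_mul_add_pow]
  rw [sum_comm]
  refine sum_eq_zero fun k hk => ?_
  rw [← mul_sum, sum_prod_pow_eq_zero, mul_zero]
  rw [← (mem_piAntidiag.mp hk).1] at h7 ⊢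
  exact exists_three_mul_add_eq_zero_or_not_dvd h7

theorem klein_quartic_card_mod_char_general {F : Type*} [Field F] [Fintype F]
    (hdvd : ¬ (7 ∣ Fintype.card F - 1)) :
    Nat.card {P : Projectivization F (Fin 3 → F) //
        (P.rep 0) ^ 3 * P.rep 1 + (P.rep 1) ^ 3 * P.rep 2 + (P.rep 2) ^ 3 * P.rep 0 = 0}
      ≡ 1 [MOD ringChar F] :=
  FiniteField.card_projective_zeros_modEq_one kleinQuartic four_ne_zero kleinQuartic_smul
    (FiniteField.sum_kleinQuartic_pow_card_sub_one hdvd)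

/-- The number of points of the Klein quartic `x³y + y³z + z³x = 0` in the projective
plane over a finite field `F` of characteristic `p ≠ 7` with `7 ∤ (q - 1)` is congruent
to `1` modulo `p`. (Since the defining polynomial is homogeneous, vanishing at the chosen
representative of a projective point is independent of the representative.) -/
theorem klein_quartic_card_mod_char {F : Type*} [Field F] [Fintype F]
    (hp7 : ringChar F ≠ 7) (hdvd : ¬ (7 ∣ Fintype.card F - 1)) :
    Nat.card {P : Projectivization F (Fin 3 → F) //
        (P.rep 0) ^ 3 * P.rep 1 + (P.rep 1) ^ 3 * P.rep 2 + (P.rep 2) ^ 3 * P.rep 0 = 0}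
      ≡ 1 [MOD ringChar F] :=
  klein_quartic_card_mod_char_general hdvd
end

section
/- Let f(x,y,z) = x³y + y³z + z³x over a finite field F_q of characteristic p ≠ 7 with 7 | (q-1). Then the number of projective points on f = 0 over F_q is congruent to 1 - 3·multinomial(q-1; (q-1)/7, 2(q-1)/7, 4(q-1)/7) modulo p. -/
open Finset

def kleinF {F : Type*} [Field F] (v : Fin 3 → F) : F :=
  v 0 ^ 3 * v 1 + v 1 ^ 3 * v 2 + v 2 ^ 3 * v 0

lemma kleinF_smul {F : Type*} [Field F] (c : F) (v : Fin 3 → F) :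
    kleinF (c • v) = c ^ 4 * kleinF v := by
  simp only [kleinF, Pi.smul_apply, smul_eq_mul]; ring

lemma klein_sum_pow (F : Type*) [Field F] [Fintype F] (k : ℕ) :
    ∑ x : F, x ^ k = if k ≠ 0 ∧ (Fintype.card F - 1) ∣ k then -1 else 0 := by
  classical
  have hq : 1 < Fintype.card F := Fintype.one_lt_card
  split_ifs with h
  · obtain ⟨hk0, m, rfl⟩ := h
    have hx1 : ∀ x ∈ (univ : Finset F) \ {0}, x ^ ((Fintype.card F - 1) * m) = (1 : F) := by
      intro x hx
      rw [mem_sdiff, mem_singleton] at hx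
      rw [pow_mul, FiniteField.pow_card_sub_one_eq_one x hx.2, one_pow]
    rw [Finset.sum_eq_sum_sdiff_singleton_add (mem_univ (0 : F)), zero_pow hk0, add_zero,
      Finset.sum_congr rfl hx1, Finset.sum_const, Finset.card_sdiff_of_subset (by simp),
      card_singleton, card_univ, nsmul_eq_mul, mul_one, Nat.cast_sub hq.le,
      FiniteField.cast_card_eq_zero, Nat.cast_one, zero_sub]
  · push_neg at h
    by_cases hk : k = 0
    · subst hk
      simp [Finset.card_univ, FiniteField.cast_card_eq_zero]
    · have hnd := h hk
      have hr : k % (Fintype.card F - 1) < Fintype.card F - 1 := Nat.mod_lt _ (by omega)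
      have hr0 : k % (Fintype.card F - 1) ≠ 0 := fun h0 => hnd (Nat.dvd_of_mod_eq_zero h0)
      have hx1 : ∀ x ∈ (univ : Finset F), x ^ k = x ^ (k % (Fintype.card F - 1)) := by
        intro x _
        by_cases hx : x = 0
        · subst hx; rw [zero_pow hk, zero_pow hr0]
        · conv_lhs => rw [← Nat.mod_add_div k (Fintype.card F - 1), pow_add, pow_mul,
            FiniteField.pow_card_sub_one_eq_one x hx, one_pow, mul_one]
      rw [Finset.sum_congr rfl hx1]
      exact FiniteField.sum_pow_lt_card_sub_one F _ hr

lemma klein_multinomial_cyc (a b c : ℕ) :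
    Nat.multinomial Finset.univ ![b, c, a] = Nat.multinomial Finset.univ ![a, b, c] := by
  simp only [Nat.multinomial, Fin.sum_univ_three, Fin.prod_univ_three,
    Matrix.cons_val_zero, Matrix.cons_val_one, Matrix.head_cons, Matrix.cons_val_two,
    Matrix.tail_cons]
  rw [show b + c + a = a + b + c from by omega,
    show b.factorial * c.factorial * a.factorial
       = a.factorial * b.factorial * c.factorial from by ring]

lemma klein_card_nonzero (F : Type*) [Field F] [Fintype F] :
    Nat.card {v : Fin 3 → F // kleinF v = 0 ∧ v ≠ 0}
      = Nat.card {P : Projectivization F (Fin 3 → F) // kleinF P.rep = 0}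
        * (Fintype.card F - 1) := by
  have hg : Function.Bijective
      (fun Pc : {P : Projectivization F (Fin 3 → F) // kleinF P.rep = 0} × Fˣ =>
        (⟨(Pc.2 : F) • Pc.1.1.rep,
          by rw [kleinF_smul, Pc.1.2, mul_zero],
          smul_ne_zero (Units.ne_zero Pc.2) Pc.1.1.rep_nonzero⟩ :
          {v : Fin 3 → F // kleinF v = 0 ∧ v ≠ 0})) := by
    constructor
    · rintro ⟨⟨P, hP⟩, c⟩ ⟨⟨Q, hQ⟩, e⟩ h
      simp only [Subtype.mk.injEq] at h
      have hPQ : P = Q := by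
        have h1 : Projectivization.mk F ((c : F) • P.rep)
            (smul_ne_zero (Units.ne_zero c) P.rep_nonzero) = P := by
          conv_rhs => rw [← P.mk_rep]
          rw [Projectivization.mk_eq_mk_iff]
          exact ⟨c, (Units.smul_def c P.rep).symm⟩
        have h2 : Projectivization.mk F ((e : F) • Q.rep)
            (smul_ne_zero (Units.ne_zero e) Q.rep_nonzero) = Q := by
          conv_rhs => rw [← Q.mk_rep]
          rw [Projectivization.mk_eq_mk_iff]
          exact ⟨e, (Units.smul_def e Q.rep).symm⟩
        rw [← h1, ← h2]
        apply (Projectivization.mk_eq_mk_iff F _ _ _ _).mpr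
        exact ⟨1, by rw [one_smul, h]⟩
      subst hPQ
      have hce : (c : F) = (e : F) :=
        smul_left_injective F P.rep_nonzero h
      simp only [Prod.mk.injEq, Subtype.mk.injEq]
      exact ⟨trivial, Units.ext hce⟩
    · rintro ⟨v, hv0, hvne⟩
      obtain ⟨a, ha⟩ := Projectivization.exists_smul_eq_mk_rep F v hvne
      refine ⟨⟨⟨Projectivization.mk F v hvne, ?_⟩, a⁻¹⟩, ?_⟩
      · rw [← ha, Units.smul_def, kleinF_smul, hv0, mul_zero]
      · apply Subtype.ext
        show ((a⁻¹ : Fˣ) : F) • (Projectivization.mk F v hvne).rep = v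
        rw [← ha, ← Units.smul_def, inv_smul_smul]
  rw [← Nat.card_eq_of_bijective _ hg, Nat.card_prod, Nat.card_units,
    Nat.card_eq_fintype_card (α := F)]

lemma klein_swap (F : Type*) [Field F] [Fintype F] (e₀ e₁ e₂ : ℕ) :
    ∑ v : Fin 3 → F, v 0 ^ e₀ * (v 1 ^ e₁ * v 2 ^ e₂)
      = (∑ x : F, x ^ e₀) * ((∑ x : F, x ^ e₁) * (∑ x : F, x ^ e₂)) := by
  classical
  have h := Finset.prod_univ_sum (fun _ : Fin 3 => (univ : Finset F))
      (fun j x => x ^ (![e₀, e₁, e₂] j))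
  rw [Fin.prod_univ_three] at h
  simp only [Matrix.cons_val_zero, Matrix.cons_val_one, Matrix.head_cons,
    Matrix.cons_val_two, Matrix.tail_cons, Fintype.piFinset_univ] at h
  rw [← mul_assoc, h]
  apply Finset.sum_congr rfl
  intro v _
  rw [Fin.prod_univ_three]
  simp [mul_assoc]

lemma klein_expand (F : Type*) [Field F] [Fintype F] (d : ℕ) :
    ∑ v : Fin 3 → F, kleinF v ^ d
      = ∑ k ∈ Finset.piAntidiag (univ : Finset (Fin 3)) d,
          (Nat.multinomial Finset.univ k : F) *
            ((∑ x : F, x ^ (3 * k 0 + k 2)) *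
              ((∑ x : F, x ^ (k 0 + 3 * k 1)) * (∑ x : F, x ^ (k 1 + 3 * k 2)))) := by
  classical
  have h1 : ∀ v : Fin 3 → F, kleinF v ^ d
      = ∑ k ∈ Finset.piAntidiag (univ : Finset (Fin 3)) d,
          (Nat.multinomial Finset.univ k : F) *
            (v 0 ^ (3 * k 0 + k 2) * (v 1 ^ (k 0 + 3 * k 1) * v 2 ^ (k 1 + 3 * k 2))) := by
    intro v
    have h0 : kleinF v = ∑ i : Fin 3, v i ^ 3 * v (![1, 2, 0] i) := by
      simp [kleinF, Fin.sum_univ_three]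
    rw [h0, Finset.sum_pow_eq_sum_piAntidiag]
    apply Finset.sum_congr rfl
    intro k _
    congr 1
    rw [Fin.prod_univ_three]
    simp only [Matrix.cons_val_zero, Matrix.cons_val_one, Matrix.head_cons,
      Matrix.cons_val_two, Matrix.tail_cons]
    ring
  rw [Finset.sum_congr rfl fun v _ => h1 v, Finset.sum_comm]
  apply Finset.sum_congr rfl
  intro k _
  rw [← Finset.mul_sum, klein_swap]

lemma klein_eval (F : Type*) [Field F] [Fintype F] {a : ℕ}
    (hD : Fintype.card F - 1 = 7 * a) :
    ∑ v : Fin 3 → F, kleinF v ^ (Fintype.card F - 1)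
      = -(3 * (Nat.multinomial Finset.univ ![a, 2 * a, 4 * a] : F)) := by
  classical
  have hq : 1 < Fintype.card F := Fintype.one_lt_card
  have ha1 : 1 ≤ a := by omega
  set d := Fintype.card F - 1 with hd
  have hfac : ∀ e : ℕ, e ≠ 0 → d ∣ e → ∑ x : F, x ^ e = -1 := by
    intro e h1 h2; rw [klein_sum_pow, if_pos ⟨h1, h2⟩]
  have hfun : ∀ (k : Fin 3 → ℕ) (x y z : ℕ), k 0 = x → k 1 = y → k 2 = z →
      k = ![x, y, z] := by
    intro k x y z h0 h1 h2
    funext i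
    fin_cases i <;> simp [h0, h1, h2]
  have hne12 : (![a, 2*a, 4*a] : Fin 3 → ℕ) ≠ ![2*a, 4*a, a] := by
    intro h; have := congrFun h 0; simp at this; omega
  have hne13 : (![a, 2*a, 4*a] : Fin 3 → ℕ) ≠ ![4*a, a, 2*a] := by
    intro h; have := congrFun h 0; simp at this; omega
  have hne23 : (![2*a, 4*a, a] : Fin 3 → ℕ) ≠ ![4*a, a, 2*a] := by
    intro h; have := congrFun h 0; simp at this; omega
  rw [klein_expand]
  rw [← Finset.sum_subset (s₁ := ({![a, 2*a, 4*a], ![2*a, 4*a, a], ![4*a, a, 2*a]} :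
      Finset (Fin 3 → ℕ))) ?hsub ?hzero]
  · rw [Finset.sum_insert (by simp [hne12, hne13]),
      Finset.sum_insert (by simp [hne23]), Finset.sum_singleton]
    simp only [Matrix.cons_val_zero, Matrix.cons_val_one, Matrix.head_cons,
      Matrix.cons_val_two, Matrix.tail_cons]
    rw [show 3*a + 4*a = 7*a from by ring, show a + 3*(2*a) = 7*a from by ring,
      show 2*a + 3*(4*a) = 14*a from by ring, show 3*(2*a) + a = 7*a from by ring,
      show 4*a + 3*a = 7*a from by ring, show 3*(4*a) + 2*a = 14*a from by ring]
    rw [hfac (7*a) (by omega) ⟨1, by omega⟩, hfac (14*a) (by omega) ⟨2, by omega⟩]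
    rw [show Nat.multinomial Finset.univ ![4*a, a, 2*a]
        = Nat.multinomial Finset.univ ![2*a, 4*a, a] from klein_multinomial_cyc (2*a) (4*a) a,
      show Nat.multinomial Finset.univ ![2*a, 4*a, a]
        = Nat.multinomial Finset.univ ![a, 2*a, 4*a] from klein_multinomial_cyc a (2*a) (4*a)]
    ring
  case hsub =>
    intro k hk
    simp only [Finset.mem_insert, Finset.mem_singleton] at hk
    rw [Finset.mem_piAntidiag]
    refine ⟨?_, fun i _ => mem_univ i⟩
    rcases hk with rfl | rfl | rfl <;>
      · rw [Fin.sum_univ_three]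
        simp only [Matrix.cons_val_zero, Matrix.cons_val_one, Matrix.head_cons,
          Matrix.cons_val_two, Matrix.tail_cons]
        omega
  case hzero =>
    intro k hk hkT
    rw [Finset.mem_piAntidiag] at hk
    have hsum : k 0 + k 1 + k 2 = 7 * a := by
      have h := hk.1; rw [Fin.sum_univ_three] at h; omega
    by_cases hall : (3 * k 0 + k 2 ≠ 0 ∧ d ∣ 3 * k 0 + k 2) ∧
        (k 0 + 3 * k 1 ≠ 0 ∧ d ∣ k 0 + 3 * k 1) ∧
        (k 1 + 3 * k 2 ≠ 0 ∧ d ∣ k 1 + 3 * k 2)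
    · exfalso
      apply hkT
      obtain ⟨⟨h0ne, m0, hm0⟩, ⟨h1ne, m1, hm1⟩, ⟨h2ne, m2, hm2⟩⟩ := hall
      have hd0 : 0 < d := by omega
      have hb0 : d * m0 ≤ d * 3 := by omega
      have hb1 : d * m1 ≤ d * 3 := by omega
      have hb2 : d * m2 ≤ d * 3 := by omega
      have hm0le : m0 ≤ 3 := Nat.le_of_mul_le_mul_left hb0 hd0
      have hm1le : m1 ≤ 3 := Nat.le_of_mul_le_mul_left hb1 hd0
      have hm2le : m2 ≤ 3 := Nat.le_of_mul_le_mul_left hb2 hd0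
      have hm0p : 1 ≤ m0 := Nat.pos_of_ne_zero (by rintro rfl; omega)
      have hm1p : 1 ≤ m1 := Nat.pos_of_ne_zero (by rintro rfl; omega)
      have hm2p : 1 ≤ m2 := Nat.pos_of_ne_zero (by rintro rfl; omega)
      have hcomp : (k 0 = a ∧ k 1 = 2*a ∧ k 2 = 4*a) ∨
          (k 0 = 2*a ∧ k 1 = 4*a ∧ k 2 = a) ∨
          (k 0 = 4*a ∧ k 1 = a ∧ k 2 = 2*a) := by
        interval_cases m0 <;> interval_cases m1 <;> interval_cases m2 <;> omega
      simp only [Finset.mem_insert, Finset.mem_singleton]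
      rcases hcomp with ⟨h0, h1, h2⟩ | ⟨h0, h1, h2⟩ | ⟨h0, h1, h2⟩
      · exact Or.inl (hfun k _ _ _ h0 h1 h2)
      · exact Or.inr (Or.inl (hfun k _ _ _ h0 h1 h2))
      · exact Or.inr (Or.inr (hfun k _ _ _ h0 h1 h2))
    · rw [klein_sum_pow F (3 * k 0 + k 2), klein_sum_pow F (k 0 + 3 * k 1),
        klein_sum_pow F (k 1 + 3 * k 2)]
      rw [← hd]
      rcases not_and_or.mp hall with h | h
      · rw [if_neg h]; simp
      · rcases not_and_or.mp h with h' | h' <;> rw [if_neg h'] <;> simp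

/-- For a finite field `F` with `q` elements, of characteristic `p ≠ 7` and with
`7 ∣ (q - 1)`, the number of points of the Klein quartic `x³y + y³z + z³x = 0` in the
projective plane over `F` is congruent modulo `p` to
`1 - 3 · multinomial(q-1; (q-1)/7, 2(q-1)/7, 4(q-1)/7)`. -/
theorem klein_quartic_card_mod_char_of_dvd {F : Type*} [Field F] [Fintype F]
    (hp7 : ringChar F ≠ 7) (hdvd : 7 ∣ Fintype.card F - 1) :
    (Nat.card {P : Projectivization F (Fin 3 → F) //
        (P.rep 0) ^ 3 * P.rep 1 + (P.rep 1) ^ 3 * P.rep 2 + (P.rep 2) ^ 3 * P.rep 0 = 0} : ℤ)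
      ≡ 1 - 3 * (Nat.multinomial Finset.univ
          ![(Fintype.card F - 1) / 7, 2 * (Fintype.card F - 1) / 7,
            4 * (Fintype.card F - 1) / 7] : ℤ) [ZMOD (ringChar F)] := by
  classical
  have hq : 1 < Fintype.card F := Fintype.one_lt_card
  obtain ⟨a, hD⟩ := hdvd
  have ha1 : 1 ≤ a := by omega
  haveI hfact : Fact (ringChar F).Prime := ⟨CharP.char_is_prime F (ringChar F)⟩
  have hA1 : (univ.filter fun v : Fin 3 → F => kleinF v = 0)
      = insert 0 (univ.filter fun v : Fin 3 → F => kleinF v = 0 ∧ v ≠ 0) := by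
    ext v
    simp only [mem_filter, mem_univ, true_and, mem_insert]
    constructor
    · intro h
      by_cases hv : v = 0
      · exact Or.inl hv
      · exact Or.inr ⟨h, hv⟩
    · rintro (rfl | ⟨h, -⟩)
      · show kleinF 0 = 0
        simp [kleinF]
      · exact h
  have hA2 : (univ.filter fun v : Fin 3 → F => kleinF v = 0).card
      = Nat.card {P : Projectivization F (Fin 3 → F) // kleinF P.rep = 0}
          * (Fintype.card F - 1) + 1 := by
    rw [hA1, Finset.card_insert_of_notMem (by simp), ← klein_card_nonzero F]
    congr 1
    rw [Nat.card_eq_fintype_card, Fintype.card_subtype]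
  have hsum : ((univ.filter fun v : Fin 3 → F => kleinF v = 0).card : F)
      = ∑ v : Fin 3 → F, (1 - kleinF v ^ (Fintype.card F - 1)) := by
    rw [← Finset.sum_boole]
    apply Finset.sum_congr rfl
    intro v _
    by_cases hv : kleinF v = 0
    · rw [if_pos hv, hv, zero_pow (by omega), sub_zero]
    · rw [if_neg hv, FiniteField.pow_card_sub_one_eq_one _ hv, sub_self]
  have hsum2 : ∑ v : Fin 3 → F, (1 - kleinF v ^ (Fintype.card F - 1))
      = 3 * (Nat.multinomial Finset.univ ![a, 2 * a, 4 * a] : F) := by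
    rw [Finset.sum_sub_distrib, klein_eval F hD, Finset.sum_const, card_univ,
      Fintype.card_fun, nsmul_eq_mul, mul_one, Nat.cast_pow, FiniteField.cast_card_eq_zero,
      zero_pow (by simp), zero_sub, neg_neg]
  have hNF : ((Nat.card {P : Projectivization F (Fin 3 → F) // kleinF P.rep = 0} : ℕ) : F)
      = 1 - 3 * (Nat.multinomial Finset.univ ![a, 2 * a, 4 * a] : F) := by
    have h1 : ((Nat.card {P : Projectivization F (Fin 3 → F) // kleinF P.rep = 0}
        * (Fintype.card F - 1) + 1 : ℕ) : F)
        = 3 * (Nat.multinomial Finset.univ ![a, 2 * a, 4 * a] : F) := by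
      rw [← hA2, hsum, hsum2]
    rw [Nat.cast_add, Nat.cast_mul, Nat.cast_sub hq.le, Nat.cast_one,
      FiniteField.cast_card_eq_zero] at h1
    linear_combination -h1
  show ((Nat.card {P : Projectivization F (Fin 3 → F) // kleinF P.rep = 0} : ℕ) : ℤ)
      ≡ 1 - 3 * (Nat.multinomial Finset.univ
          ![(Fintype.card F - 1) / 7, 2 * (Fintype.card F - 1) / 7,
            4 * (Fintype.card F - 1) / 7] : ℤ) [ZMOD (ringChar F)]
  rw [show (Fintype.card F - 1) / 7 = a from by omega,
    show 2 * (Fintype.card F - 1) / 7 = 2 * a from by omega,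
    show 4 * (Fintype.card F - 1) / 7 = 4 * a from by omega]
  apply (ZMod.intCast_eq_intCast_iff _ _ _).mp
  apply (ZMod.castHom (dvd_refl (ringChar F)) F).injective
  rw [map_intCast, map_intCast]
  push_cast
  rw [hNF]
end

section
/- Over a field containing a primitive 7th root of unity ζ₇, each point (a,b,c) on the Fermat curve X⁷+Y⁷+Z⁷=0 with abc ≠ 0 has the 7 points (ζ₇^i a, ζ₇^{2i} b, ζ₇^{4i} c), i = 0,…,6, also on the Fermat curve, and all of them map under φ(X,Y,Z) = (X³Z, Y³X, Z³Y) to the same projective point on the Klein Quartic. -/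
/-- Over a field with a primitive 7th root of unity `ζ`, for each point `(a, b, c)` of the
Fermat curve `X⁷ + Y⁷ + Z⁷ = 0` with `a b c ≠ 0`, all the points
`(ζ^i a, ζ^{2i} b, ζ^{4i} c)` also lie on the Fermat curve, and they all map under
`φ(X,Y,Z) = (X³Z, Y³X, Z³Y)` to the same projective point of the Klein quartic, i.e. their
images agree up to a nonzero scalar. -/
theorem fermat_orbit_same_image {K : Type*} [Field K] (ζ : K) (hζ : IsPrimitiveRoot ζ 7)
    (a b c : K) (h : a ^ 7 + b ^ 7 + c ^ 7 = 0) (habc : a * b * c ≠ 0) (i : ℕ) :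
    ((ζ ^ i * a) ^ 7 + (ζ ^ (2 * i) * b) ^ 7 + (ζ ^ (4 * i) * c) ^ 7 = 0) ∧
    ∃ lam : K, lam ≠ 0 ∧
      (ζ ^ i * a) ^ 3 * (ζ ^ (4 * i) * c) = lam * (a ^ 3 * c) ∧
      (ζ ^ (2 * i) * b) ^ 3 * (ζ ^ i * a) = lam * (b ^ 3 * a) ∧
      (ζ ^ (4 * i) * c) ^ 3 * (ζ ^ (2 * i) * b) = lam * (c ^ 3 * b) := by
  have h7 : ζ ^ 7 = 1 := hζ.pow_eq_one
  have h7i : ζ ^ (7 * i) = 1 := by rw [pow_mul, h7, one_pow]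
  have hw : (ζ ^ i) ^ 7 = 1 := by rw [← pow_mul, mul_comm, pow_mul, h7, one_pow]
  constructor
  · have e : ∀ k : ℕ, (ζ ^ (k * i)) ^ 7 = 1 := fun k => by
      rw [mul_comm k i, pow_mul, ← pow_mul, mul_comm k 7, pow_mul, hw, one_pow]
    calc (ζ ^ i * a) ^ 7 + (ζ ^ (2 * i) * b) ^ 7 + (ζ ^ (4 * i) * c) ^ 7
        = (ζ ^ (1 * i)) ^ 7 * a ^ 7 + (ζ ^ (2 * i)) ^ 7 * b ^ 7 + (ζ ^ (4 * i)) ^ 7 * c ^ 7 := by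
          ring_nf
      _ = a ^ 7 + b ^ 7 + c ^ 7 := by rw [e 1, e 2, e 4]; ring
      _ = 0 := h
  · refine ⟨1, one_ne_zero, ?_, ?_, ?_⟩ <;> rw [one_mul]
    · calc (ζ ^ i * a) ^ 3 * (ζ ^ (4 * i) * c) = (ζ ^ i) ^ 7 * (a ^ 3 * c) := by ring
        _ = a ^ 3 * c := by rw [hw, one_mul]
    · calc (ζ ^ (2 * i) * b) ^ 3 * (ζ ^ i * a) = (ζ ^ i) ^ 7 * (b ^ 3 * a) := by ring
        _ = b ^ 3 * a := by rw [hw, one_mul]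
    · calc (ζ ^ (4 * i) * c) ^ 3 * (ζ ^ (2 * i) * b) = ((ζ ^ i) ^ 7) ^ 2 * (c ^ 3 * b) := by ring
        _ = c ^ 3 * b := by rw [hw, one_pow, one_mul]
end

section
/- Let p ≡ 1 (mod 7) be a prime. Then the multinomial coefficient (p-1)! / (((p-1)/7)! ((2(p-1))/7)! ((4(p-1))/7)!) is congruent modulo p to the binomial coefficient C(3(p-1)/7, (p-1)/7). -/
lemma fact_mul_fact_zmod (p : ℕ) (hp : p.Prime) :
    ∀ m, m ≤ p - 1 → ((m.factorial * (p - 1 - m).factorial : ℕ) : ZMod p) = (-1) ^ (m + 1) := by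
  haveI : Fact p.Prime := ⟨hp⟩
  intro m
  induction m with
  | zero =>
    intro _
    simp [ZMod.wilsons_lemma]
  | succ m ih =>
    intro hm
    have h2 := ih (by omega)
    have h1 : p - 1 - m = p - 1 - (m + 1) + 1 := by omega
    rw [h1, Nat.cast_mul, Nat.factorial_succ, Nat.cast_mul] at h2
    have hc : ((p - 1 - (m + 1) + 1 : ℕ) : ZMod p) = -((m + 1 : ℕ) : ZMod p) := by
      apply eq_neg_of_add_eq_zero_left
      rw [← Nat.cast_add, show p - 1 - (m + 1) + 1 + (m + 1) = p by omega, ZMod.natCast_self]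
    rw [hc] at h2
    rw [Nat.cast_mul, Nat.factorial_succ, Nat.cast_mul, pow_succ]
    linear_combination -h2

/-- For a prime `p ≡ 1 (mod 7)`, the multinomial coefficient
`(p-1)! / (((p-1)/7)! ((2(p-1))/7)! ((4(p-1))/7)!)` is congruent modulo `p` to the binomial
coefficient `C(3(p-1)/7, (p-1)/7)`. -/
theorem multinomial_cong_choose (p : ℕ) (hp : p.Prime) (hq : p % 7 = 1) :
    Nat.multinomial Finset.univ
        ![(p - 1) / 7, 2 * (p - 1) / 7, 4 * (p - 1) / 7]
      ≡ Nat.choose (3 * (p - 1) / 7) ((p - 1) / 7) [MOD p] := by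
  haveI : Fact p.Prime := ⟨hp⟩
  have hp2 : 2 ≤ p := hp.two_le
  have hpodd : p % 2 = 1 := by
    rcases hp.eq_two_or_odd with h | h
    · omega
    · exact h
  set k := (p - 1) / 7 with hk
  have h7 : p - 1 = 7 * k := by omega
  have hkeven : k % 2 = 0 := by omega
  have h2 : 2 * (p - 1) / 7 = 2 * k := by omega
  have h4 : 4 * (p - 1) / 7 = 4 * k := by omega
  have h3 : 3 * (p - 1) / 7 = 3 * k := by omega
  rw [h2, h4, h3, ← ZMod.natCast_eq_natCast_iff]
  have spec := Nat.multinomial_spec (Finset.univ : Finset (Fin 3)) ![k, 2 * k, 4 * k]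
  rw [Fin.prod_univ_three, Fin.sum_univ_three] at spec
  simp only [Matrix.cons_val_zero, Matrix.cons_val_one, Matrix.head_cons,
    Matrix.cons_val_two, Matrix.tail_cons] at spec
  have hsum : k + 2 * k + 4 * k = 7 * k := by ring
  rw [hsum] at spec
  set M := Nat.multinomial (Finset.univ : Finset (Fin 3)) ![k, 2 * k, 4 * k] with hM
  -- key1 : M * a = -1 in ZMod p
  have key1 : (M : ZMod p) * (((k.factorial : ℕ) : ZMod p) * ((2 * k).factorial : ZMod p)
      * (((4 * k).factorial : ℕ) : ZMod p)) = -1 := by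
    have : ((k.factorial * (2 * k).factorial * (4 * k).factorial * M : ℕ) : ZMod p)
        = (((7 * k).factorial : ℕ) : ZMod p) := by rw [spec]
    rw [← h7, ZMod.wilsons_lemma] at this
    push_cast at this
    linear_combination this
  -- key2 : (3k)! * (4k)! = -1 in ZMod p
  have key2 : (((3 * k).factorial : ℕ) : ZMod p) * (((4 * k).factorial : ℕ) : ZMod p) = -1 := by
    have := fact_mul_fact_zmod p hp (3 * k) (by omega)
    rw [show p - 1 - 3 * k = 4 * k by omega] at this
    rw [Nat.cast_mul] at this
    rw [this]
    have hodd : Odd (3 * k + 1) := by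
      rcases Nat.even_or_odd (3 * k + 1) with h | h
      · exfalso; rcases h with ⟨c, hc⟩; omega
      · exact h
    exact hodd.neg_one_pow
  -- choose identity
  have key3 : (3 * k).choose k * (2 * k).factorial * k.factorial = (3 * k).factorial := by
    have := Nat.add_choose_mul_factorial_mul_factorial (2 * k) k
    rw [show 2 * k + k = 3 * k by ring] at this
    exact this
  have key4 : (((3 * k).choose k : ℕ) : ZMod p) * (((k.factorial : ℕ) : ZMod p)
      * ((2 * k).factorial : ZMod p) * (((4 * k).factorial : ℕ) : ZMod p)) = -1 := by
    have : (((3 * k).choose k * (2 * k).factorial * k.factorial : ℕ) : ZMod p)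
        = (((3 * k).factorial : ℕ) : ZMod p) := by rw [key3]
    push_cast at this
    calc (((3 * k).choose k : ℕ) : ZMod p) * (((k.factorial : ℕ) : ZMod p)
        * ((2 * k).factorial : ZMod p) * (((4 * k).factorial : ℕ) : ZMod p))
        = (((3 * k).factorial : ℕ) : ZMod p) * (((4 * k).factorial : ℕ) : ZMod p) := by
          rw [← this]; ring
      _ = -1 := key2
  have ha : (((k.factorial : ℕ) : ZMod p) * ((2 * k).factorial : ZMod p)
      * (((4 * k).factorial : ℕ) : ZMod p)) ≠ 0 := by
    have h1 : ¬ p ∣ k.factorial := by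
      rw [hp.dvd_factorial]; omega
    have h2 : ¬ p ∣ (2 * k).factorial := by
      rw [hp.dvd_factorial]; omega
    have h3 : ¬ p ∣ (4 * k).factorial := by
      rw [hp.dvd_factorial]; omega
    have e1 : ((k.factorial : ℕ) : ZMod p) ≠ 0 := by
      rw [Ne, ZMod.natCast_eq_zero_iff]; exact h1
    have e2 : (((2 * k).factorial : ℕ) : ZMod p) ≠ 0 := by
      rw [Ne, ZMod.natCast_eq_zero_iff]; exact h2
    have e3 : (((4 * k).factorial : ℕ) : ZMod p) ≠ 0 := by
      rw [Ne, ZMod.natCast_eq_zero_iff]; exact h3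
    exact mul_ne_zero (mul_ne_zero e1 e2) e3
  exact mul_right_cancel₀ ha (key1.trans key4.symm)
end
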